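/- arXiv:1506.04387 — 5 statements merged into one kernel-verified Lean document; each statement's English description precedes it below -/
import Mathlib

section
/- Let k be a commutative ring, G a finite group, K and H subgroups of G, and g ∈ G. Then the (kK, kH)-bimodule kK ⊗_{k[K ∩ gHg⁻¹]} k[gH] is isomorphic to the (kK, kH)-bimodule k[KgH] spanned by the double coset KgH inside kG, where k[gH] carries the (k[gHg⁻¹], kH)-bimodule structure given by (gh₁g⁻¹)·(gh)·h₂ = g h₁ h h₂. -/
/-!
The map `x ⊗ gh ↦ xgh` is the push-forward `k[K × H] → kG` along `(x, h) ↦ xgh`, whose image is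
`k[KgH]`. The kernel of a push-forward along any map is spanned by the differences of basis
vectors lying in a common fibre, and two pairs with `xgh = x'gh'` differ by a single balancing
relation, with `u = x'⁻¹x = g(h'h⁻¹)g⁻¹ ∈ K ∩ gHg⁻¹`.
-/

noncomputable section

/-- The `k`-span `k[S]` of a subset `S ⊆ G` inside the group algebra `kG`. -/
def kspan (k : Type*) [CommRing k] {G : Type*} [Group G] (S : Set G) :
    Submodule k (MonoidAlgebra k G) :=
  Submodule.span k ((fun x => MonoidAlgebra.single x (1 : k)) '' S)

open Submodule

theorem Finsupp.ker_lmapDomain_eq_span {R α β : Type*} [Ring R] (f : α → β) :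
    LinearMap.ker (lmapDomain R R f) =
      span R {z | ∃ a b, f a = f b ∧ z = single a (1 : R) - single b 1} := by
  refine le_antisymm (fun v hv => ?_) (span_le.2 ?_)
  · cases isEmpty_or_nonempty α
    · simp [Subsingleton.elim v 0]
    -- `v` differs from its push-forward along a section of `f` by a sum of relations
    set r : α → α := Function.invFun f ∘ f
    have hr (a : α) : f (r a) = f a := Function.invFun_eq ⟨a, rfl⟩
    have hsub (w : α →₀ R) : w - mapDomain r w ∈
        span R {z | ∃ a b, f a = f b ∧ z = single a (1 : R) - single b 1} := by
      induction w using induction_linear with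
      | zero => simp
      | add w₁ w₂ h₁ h₂ =>
        rw [mapDomain_add, add_sub_add_comm]
        exact add_mem h₁ h₂
      | single a c =>
        rw [mapDomain_single, ← smul_single_one a c, ← smul_single_one (r a) c, ← smul_sub]
        exact smul_mem _ c (subset_span ⟨a, r a, (hr a).symm, rfl⟩)
    have hv0 : mapDomain r v = 0 := by
      rw [mapDomain_comp]
      simpa using congrArg (mapDomain (Function.invFun f)) hv
    simpa [hv0] using hsub v
  · rintro z ⟨a, b, hab, rfl⟩
    simp [mapDomain_sub, hab]

theorem range_coeffLinearEquiv_symm_comp_lmapDomain (k : Type*) [CommRing k] {α G : Type*}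
    [Group G] (f : α → G) :
    LinearMap.range ((MonoidAlgebra.coeffLinearEquiv k).symm.toLinearMap ∘ₗ
      Finsupp.lmapDomain k k f) = kspan k (Set.range f) := by
  rw [LinearMap.range_comp, Finsupp.range_lmapDomain, map_span, kspan, ← Set.range_comp,
    ← Set.range_comp]
  rfl

section DoubleCoset

variable {k G : Type*} [CommRing k] [Group G] (K H : Subgroup G) (g : G)

theorem balancing_relations_eq_same_product_relations :
    {z : (↥K × ↥H) →₀ k | ∃ (x : K) (h : H) (uK : K) (uH : H),
        (uK : G) = g * (uH : G) * g⁻¹ ∧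
        z = Finsupp.single (x * uK, h) 1 - Finsupp.single (x, uH * h) 1} =
      {z | ∃ a b : ↥K × ↥H, (a.1 : G) * g * a.2 = (b.1 : G) * g * b.2 ∧
        z = Finsupp.single a 1 - Finsupp.single b 1} := by
  ext z
  constructor
  · rintro ⟨x, h, uK, uH, hu, rfl⟩
    refine ⟨(x * uK, h), (x, uH * h), ?_, rfl⟩
    simp only [Subgroup.coe_mul, hu]
    group
  · rintro ⟨⟨x, h⟩, ⟨x', h'⟩, hxh, rfl⟩
    refine ⟨x', h, x'⁻¹ * x, h' * h⁻¹, ?_, by simp⟩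
    have hx : (x : G) = x' * g * h' * (h : G)⁻¹ * g⁻¹ := by
      rw [← hxh]
      group
    simp only [Subgroup.coe_mul, Subgroup.coe_inv, hx]
    group

theorem range_mul_mul_eq :
    Set.range (fun p : ↥K × ↥H => (p.1 : G) * g * p.2) =
      {w : G | ∃ x ∈ K, ∃ h ∈ H, w = x * g * h} := by
  ext w
  simp [eq_comm]

end DoubleCoset

theorem stmt0_general {k : Type*} [CommRing k] {G : Type*} [Group G]
    (K H : Subgroup G) (g : G) :
    ∃ e : (((↥K × ↥H) →₀ k) ⧸ Submodule.span k
        {z : (↥K × ↥H) →₀ k | ∃ (x : K) (h : H) (uK : K) (uH : H),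
          (uK : G) = g * (uH : G) * g⁻¹ ∧
          z = Finsupp.single (x * uK, h) 1 - Finsupp.single (x, uH * h) 1})
      ≃ₗ[k] kspan k {w : G | ∃ x ∈ K, ∃ h ∈ H, w = x * g * h},
      ∀ (x : K) (h : H),
        ((e (Submodule.Quotient.mk (Finsupp.single (x, h) 1)) : MonoidAlgebra k G))
          = MonoidAlgebra.single ((x : G) * g * (h : G)) 1 := by
  set mul : ↥K × ↥H → G := fun p => (p.1 : G) * g * p.2
  set F := (MonoidAlgebra.coeffLinearEquiv k).symm.toLinearMap ∘ₗ Finsupp.lmapDomain k k mul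
  have hrange : LinearMap.range F = kspan k {w : G | ∃ x ∈ K, ∃ h ∈ H, w = x * g * h} := by
    rw [range_coeffLinearEquiv_symm_comp_lmapDomain, range_mul_mul_eq]
  refine ⟨(quotEquivOfEq _ _ ?_).trans (F.quotKerEquivRange.trans (.ofEq _ _ hrange)),
    fun x h => ?_⟩
  · rw [balancing_relations_eq_same_product_relations, LinearEquiv.ker_comp,
      Finsupp.ker_lmapDomain_eq_span]
  · simp [F, mul]

/-- For subgroups `K, H ≤ G` and `g ∈ G` there is an isomorphism of
`(kK,kH)`-bimodules `kK ⊗_{k[K ∩ ᵍH]} k[gH] ≅ k[KgH]`.  The balanced tensor product is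
modelled as the quotient of the free `k`-module on `K × H` (with basis `x ⊗ gh` for
`x ∈ K`, `h ∈ H`) by the `k[K ∩ ᵍH]`-balancing relations
`(x·u) ⊗ (g·h) - x ⊗ (u·g·h)` for `u = g·uH·g⁻¹ ∈ K ∩ ᵍH`; here `k[gH]` carries the
`(k[ᵍH], kH)`-bimodule structure `(gh₁g⁻¹)·(gh)·h₂ = g·h₁·h·h₂`.  The isomorphism sends
the class of `x ⊗ g·h` to `x·g·h ∈ k[KgH]`, so it is an isomorphism of
`(kK,kH)`-bimodules. -/
theorem stmt0 {k : Type*} [CommRing k] {G : Type*} [Group G] [Finite G]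
    (K H : Subgroup G) (g : G) :
    ∃ e : (((↥K × ↥H) →₀ k) ⧸ Submodule.span k
        {z : (↥K × ↥H) →₀ k | ∃ (x : K) (h : H) (uK : K) (uH : H),
          (uK : G) = g * (uH : G) * g⁻¹ ∧
          z = Finsupp.single (x * uK, h) 1 - Finsupp.single (x, uH * h) 1})
      ≃ₗ[k] kspan k {w : G | ∃ x ∈ K, ∃ h ∈ H, w = x * g * h},
      ∀ (x : K) (h : H),
        ((e (Submodule.Quotient.mk (Finsupp.single (x, h) 1)) : MonoidAlgebra k G))
          = MonoidAlgebra.single ((x : G) * g * (h : G)) 1 :=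
  stmt0_general K H g
end
end

section
/- Let k be a field of characteristic p, P a finite p-group, G a finite group containing P, and x, y, c, a ∈ G with c ∈ C_G(P ∩ xPx⁻¹), a ∈ P, and cx = ay·b for some b ∈ P where y normalizes P. Then for every cohomology class ζ ∈ H*(P, k), the class tr^P_{P∩xPx⁻¹} res^{xPx⁻¹}_{P∩xPx⁻¹} (ˣζ) equals |P : a⁻¹(P∩xPx⁻¹)a| · tr^P_{P∩yPy⁻¹} res^{yPy⁻¹}_{P∩yPy⁻¹}(ʸζ); in particular it equals ʸ-conjugated class scaled by the index, which vanishes in characteristic p unless x normalizes P. -/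
/-!
Write `c * x = a * w` with `w = y * b` normalizing `P`, and put `S = P ∩ ˣP`, `U = a⁻¹ S a`.
Since `c` centralizes `S`, conjugation by `c` is trivial on `H*(S)`, so
`res^{ˣP}_S (ˣζ) = res^{ᶜˣP}_S (ᶜˣζ) = res^{ᵃP}_{ᵃU} (ᵃʷζ) = ᵃ(res^P_U (ʷζ))`.
Transfer to `P` is invariant under conjugation by `a ∈ P`, so applying `tr^P_S` gives
`tr^P_U res^P_U (ʷζ) = |P : U| • ʷζ` by Frobenius reciprocity, and `ʷζ = ʸζ` because
conjugation by `b ∈ P` is trivial on `H*(P)`. If `x ∉ N_G(P)`, then `U` is a proper subgroup of the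
`p`-group `P`, so `p` divides `|P : U|`.
-/

/-- Conjugating a subgroup by a product is conjugating successively. -/
theorem map_conj_mul {G : Type*} [Group G] (Q : Subgroup G) (g h : G) :
    Q.map (MulAut.conj (g * h)).toMonoidHom
      = (Q.map (MulAut.conj h).toMonoidHom).map (MulAut.conj g).toMonoidHom := by
  rw [Subgroup.map_map]
  congr 1
  ext u
  simp [MulAut.conj, mul_assoc]

namespace Subgroup

variable {G : Type*} [Group G]

theorem map_conj_eq_self_iff {P : Subgroup G} {g : G} :
    P.map (MulAut.conj g).toMonoidHom = P ↔ g ∈ normalizer (P : Set G) :=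
  mem_normalizer_iff_map_conj_eq.symm

theorem map_conj_inv_map_conj (S : Subgroup G) (g : G) :
    (S.map (MulAut.conj g⁻¹).toMonoidHom).map (MulAut.conj g).toMonoidHom = S := by
  rw [← map_conj_mul, mul_inv_cancel]
  ext; simp

theorem mem_normalizer_of_le_map_conj [Finite G] {P : Subgroup G} {x : G}
    (h : P ≤ P.map (MulAut.conj x).toMonoidHom) : x ∈ normalizer (P : Set G) :=
  map_conj_eq_self_iff.mp <| (eq_of_le_of_card_ge h
    (card_map_of_injective (MulAut.conj x).injective).le).symm

theorem map_conj_le {P S : Subgroup G} {g : G} (hSP : S ≤ P) (hg : g ∈ normalizer (P : Set G)) :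
    S.map (MulAut.conj g).toMonoidHom ≤ P :=
  map_conj_eq_self_iff.mpr hg ▸ map_mono hSP

theorem le_of_le_map_conj_inv {P S : Subgroup G} {a : G} (ha : a ∈ P)
    (h : P ≤ S.map (MulAut.conj a⁻¹).toMonoidHom) : P ≤ S := by
  rwa [← map_le_map_iff_of_injective (f := (MulAut.conj a⁻¹).toMonoidHom)
    (MulAut.conj a⁻¹).injective, map_conj_eq_self_iff.mpr (le_normalizer (inv_mem ha))]

end Subgroup

theorem IsPGroup.dvd_relIndex {G : Type*} [Group G] [Finite G] {p : ℕ} [Fact p.Prime]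
    {P U : Subgroup G} (hP : IsPGroup p P) (hUP : ¬P ≤ U) : p ∣ U.relIndex P := by
  obtain ⟨n, hn⟩ := hP.index (U.subgroupOf P)
  have hn0 : n ≠ 0 := by
    rintro rfl
    exact hUP (Subgroup.relIndex_eq_one.mp hn)
  rw [Subgroup.relIndex, hn]
  exact dvd_pow_self p hn0

structure CohomologyOperations (k : Type*) [Field k] {G : Type*} [Group G] (P : Subgroup G)
    (A : Subgroup G → Type*) [∀ Q, Ring (A Q)] [∀ Q, Algebra k (A Q)] where
  res : ∀ Q R : Subgroup G, A Q →ₗ[k] A R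
  tr : ∀ Q R : Subgroup G, A R →ₗ[k] A Q
  conj : ∀ (g : G) (Q : Subgroup G), A Q →ₗ[k] A (Q.map (MulAut.conj g).toMonoidHom)
  tr_res_mul : ∀ (Q R : Subgroup G), R ≤ Q → ∀ (ζ : A Q) (τ : A R),
    tr Q R (res Q R ζ * τ) = ζ * tr Q R τ
  tr_one : ∀ (Q R : Subgroup G), R ≤ Q → tr Q R 1 = (R.relIndex Q : k) • (1 : A Q)
  conj_res : ∀ (g : G) (Q R : Subgroup G), R ≤ Q → ∀ ζ : A Q,
    conj g R (res Q R ζ)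
      = res (Q.map (MulAut.conj g).toMonoidHom) (R.map (MulAut.conj g).toMonoidHom) (conj g Q ζ)
  conj_conj : ∀ (g h : G) (Q : Subgroup G) (ζ : A Q),
    conj g (Q.map (MulAut.conj h).toMonoidHom) (conj h Q ζ)
      = cast (congrArg A (map_conj_mul Q g h)) (conj (g * h) Q ζ)
  conj_of_mem_centralizer : ∀ (S : Subgroup G) (c : G), c ∈ Subgroup.centralizer (S : Set G) →
    ∀ (hmap : S.map (MulAut.conj c).toMonoidHom = S) (η : A S),
      conj c S η = cast (congrArg A hmap.symm) η
  tr_conj_of_mem : ∀ a : G, a ∈ P → ∀ (S : Subgroup G) (η : A S),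
    tr P (S.map (MulAut.conj a).toMonoidHom) (conj a S η) = tr P S η

namespace CohomologyOperations

open Subgroup

variable {k : Type*} [Field k] {G : Type*} [Group G] {P : Subgroup G}
  {A : Subgroup G → Type*} [∀ Q, Ring (A Q)] [∀ Q, Algebra k (A Q)]
  (M : CohomologyOperations k P A)

theorem res_heq_res {Q Q' R R' : Subgroup G} (hQ : Q = Q') (hR : R = R') {ξ : A Q} {ξ' : A Q'}
    (h : ξ ≍ ξ') : M.res Q R ξ ≍ M.res Q' R' ξ' := by
  subst hQ hR h; rfl

theorem tr_eq_tr_of_heq {R R' : Subgroup G} (Q : Subgroup G) (hR : R = R') {ξ : A R} {ξ' : A R'}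
    (h : ξ ≍ ξ') : M.tr Q R ξ = M.tr Q R' ξ' := by
  subst hR h; rfl

theorem conj_heq_conj (g : G) {Q Q' : Subgroup G} (hQ : Q = Q') {ξ : A Q} {ξ' : A Q'}
    (h : ξ ≍ ξ') : M.conj g Q ξ ≍ M.conj g Q' ξ' := by
  subst hQ h; rfl

theorem conj_conj_heq (g h : G) (Q : Subgroup G) (ξ : A Q) :
    M.conj g (Q.map (MulAut.conj h).toMonoidHom) (M.conj h Q ξ) ≍ M.conj (g * h) Q ξ := by
  rw [M.conj_conj]
  exact cast_heq _ _

theorem tr_res {Q R : Subgroup G} (hRQ : R ≤ Q) (ξ : A Q) :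
    M.tr Q R (M.res Q R ξ) = (R.relIndex Q : k) • ξ := by
  simpa [M.tr_one Q R hRQ] using M.tr_res_mul Q R hRQ ξ 1

theorem tr_res_of_eq {Q Q' R : Subgroup G} (hQ : Q = Q') (hR : R = Q') (ξ : A Q) :
    M.tr Q' R (M.res Q R ξ) = cast (congrArg A hQ) ξ := by
  subst hQ hR
  simp [M.tr_res le_rfl]

/-- `ʷξ` for `w ∈ N_G(P)`, transported back to `A P` along `ʷP = P`. -/
def conjSelf {w : G} (hw : w ∈ normalizer (P : Set G)) (ξ : A P) : A P :=
  cast (congrArg A (map_conj_eq_self_iff.mpr hw)) (M.conj w P ξ)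

theorem tr_res_conj_of_mem_normalizer {w : G} (hw : w ∈ normalizer (P : Set G)) (ζ : A P) :
    M.tr P (P ⊓ P.map (MulAut.conj w).toMonoidHom)
        (M.res (P.map (MulAut.conj w).toMonoidHom) (P ⊓ P.map (MulAut.conj w).toMonoidHom)
          (M.conj w P ζ))
      = M.conjSelf hw ζ := by
  have hwP := map_conj_eq_self_iff.mpr hw
  exact M.tr_res_of_eq hwP (by rw [hwP, inf_idem]) _

/-- `tr^P_P ∘ res^P_P` is the identity and is invariant under conjugation by elements of `P`. -/
theorem conj_heq_self_of_mem {b : G} (hb : b ∈ P) (ξ : A P) : M.conj b P ξ ≍ ξ := by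
  have hbP := map_conj_eq_self_iff.mpr (le_normalizer hb)
  have h := M.tr_conj_of_mem b hb P (M.res P P ξ)
  rw [M.conj_res b P P le_rfl, M.tr_res_of_eq hbP hbP, M.tr_res_of_eq rfl rfl] at h
  exact (cast_heq _ _).symm.trans (heq_of_eq h)

theorem conjSelf_mul_of_mem {w b : G} (hw : w ∈ normalizer (P : Set G)) (hb : b ∈ P) :
    M.conjSelf (mul_mem hw (le_normalizer hb)) = M.conjSelf hw := by
  funext ξ
  refine eq_of_heq <| (cast_heq _ _).trans <| .trans ?_ (cast_heq _ _).symm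
  exact (M.conj_conj_heq w b P ξ).symm.trans
    (M.conj_heq_conj w (map_conj_eq_self_iff.mpr (le_normalizer hb)) (M.conj_heq_self_of_mem hb ξ))

theorem res_conj_heq_conj_res {x c a w : G} {S : Subgroup G} (hSP : S ≤ P)
    (hSX : S ≤ P.map (MulAut.conj x).toMonoidHom) (hc : c ∈ centralizer (S : Set G))
    (ha : a ∈ P) (hw : w ∈ normalizer (P : Set G)) (hcx : c * x = a * w) (ζ : A P) :
    M.res (P.map (MulAut.conj x).toMonoidHom) S (M.conj x P ζ)
      ≍ M.conj a (S.map (MulAut.conj a⁻¹).toMonoidHom)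
          (M.res P (S.map (MulAut.conj a⁻¹).toMonoidHom) (M.conjSelf hw ζ)) := by
  have hSc : S.map (MulAut.conj c).toMonoidHom = S :=
    map_conj_eq_self_iff.mpr (centralizer_le_normalizer _ hc)
  have hwP : P.map (MulAut.conj w).toMonoidHom = P := map_conj_eq_self_iff.mpr hw
  have hXc : (P.map (MulAut.conj x).toMonoidHom).map (MulAut.conj c).toMonoidHom
      = P.map (MulAut.conj a).toMonoidHom := by
    rw [← map_conj_mul, hcx, map_conj_mul, hwP]
  have hcx_heq : M.conj c _ (M.conj x P ζ) ≍ M.conj a P (M.conjSelf hw ζ) := by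
    refine (M.conj_conj_heq c x P ζ).trans ?_
    rw [hcx]
    exact (M.conj_conj_heq a w P ζ).symm.trans (M.conj_heq_conj a hwP (cast_heq _ _).symm)
  have hcentral : M.res _ S (M.conj x P ζ) ≍ M.conj c S (M.res _ S (M.conj x P ζ)) := by
    rw [M.conj_of_mem_centralizer S c hc hSc]
    exact (cast_heq _ _).symm
  refine hcentral.trans ?_
  rw [M.conj_res c _ S hSX, M.conj_res a P _ (map_conj_le hSP (le_normalizer (inv_mem ha)))]
  exact M.res_heq_res hXc (hSc.trans (map_conj_inv_map_conj S a).symm) hcx_heq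

theorem tr_res_conj_of_mul_eq {x c a w : G} {S : Subgroup G} (hSP : S ≤ P)
    (hSX : S ≤ P.map (MulAut.conj x).toMonoidHom) (hc : c ∈ centralizer (S : Set G))
    (ha : a ∈ P) (hw : w ∈ normalizer (P : Set G)) (hcx : c * x = a * w) (ζ : A P) :
    M.tr P S (M.res (P.map (MulAut.conj x).toMonoidHom) S (M.conj x P ζ))
      = ((S.map (MulAut.conj a⁻¹).toMonoidHom).relIndex P : k) • M.conjSelf hw ζ := by
  rw [M.tr_eq_tr_of_heq P (map_conj_inv_map_conj S a).symm
      (M.res_conj_heq_conj_res hSP hSX hc ha hw hcx ζ),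
    M.tr_conj_of_mem a ha, M.tr_res (map_conj_le hSP (le_normalizer (inv_mem ha)))]

end CohomologyOperations

theorem stmt4_general {k : Type*} [Field k] {p : ℕ} [Fact p.Prime] [CharP k p]
    {G : Type*} [Group G] [Finite G]
    (P : Subgroup G) (hP : IsPGroup p P)
    (A : Subgroup G → Type*) [∀ Q, Ring (A Q)] [∀ Q, Algebra k (A Q)]
    (res : ∀ Q R : Subgroup G, A Q →ₗ[k] A R)
    (tr : ∀ Q R : Subgroup G, A R →ₗ[k] A Q)
    (conj : ∀ (g : G) (Q : Subgroup G), A Q →ₗ[k] A (Q.map (MulAut.conj g).toMonoidHom))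
    -- standard identities for transfer, restriction and conjugation:
    (hfrob : ∀ (Q R : Subgroup G), R ≤ Q → ∀ (ζ : A Q) (τ : A R),
      tr Q R (res Q R ζ * τ) = ζ * tr Q R τ)
    (htr_one : ∀ (Q R : Subgroup G), R ≤ Q →
      tr Q R 1 = (R.relIndex Q : k) • (1 : A Q))
    (hconj_res : ∀ (g : G) (Q R : Subgroup G), R ≤ Q → ∀ ζ : A Q,
      conj g R (res Q R ζ)
        = res (Q.map (MulAut.conj g).toMonoidHom) (R.map (MulAut.conj g).toMonoidHom)
            (conj g Q ζ))
    (hconj_comp : ∀ (g h : G) (Q : Subgroup G) (ζ : A Q),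
      conj g (Q.map (MulAut.conj h).toMonoidHom) (conj h Q ζ)
        = cast (congrArg A (map_conj_mul Q g h)) (conj (g * h) Q ζ))
    (hconj_central : ∀ (S : Subgroup G) (c : G),
      c ∈ Subgroup.centralizer (S : Set G) →
      ∀ (hmap : S.map (MulAut.conj c).toMonoidHom = S) (η : A S),
        conj c S η = cast (congrArg A hmap.symm) η)
    (htr_conjP : ∀ a : G, a ∈ P → ∀ (S : Subgroup G) (η : A S),
      tr P (S.map (MulAut.conj a).toMonoidHom) (conj a S η) = tr P S η)
    -- the situation of the statement:
    (x y c a b : G) (hy : y ∈ Subgroup.normalizer (P : Set G)) (ha : a ∈ P) (hb : b ∈ P)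
    (hc : c ∈ Subgroup.centralizer
      ((P ⊓ P.map (MulAut.conj x).toMonoidHom : Subgroup G) : Set G))
    (hcx : c * x = a * y * b) :
    ∀ ζ : A P,
      tr P (P ⊓ P.map (MulAut.conj x).toMonoidHom)
          (res (P.map (MulAut.conj x).toMonoidHom)
            (P ⊓ P.map (MulAut.conj x).toMonoidHom) (conj x P ζ))
        = (((P ⊓ P.map (MulAut.conj x).toMonoidHom).map
              (MulAut.conj a⁻¹).toMonoidHom).relIndex P : k) •
          tr P (P ⊓ P.map (MulAut.conj y).toMonoidHom)
            (res (P.map (MulAut.conj y).toMonoidHom)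
              (P ⊓ P.map (MulAut.conj y).toMonoidHom) (conj y P ζ)) ∧
      (x ∉ Subgroup.normalizer (P : Set G) →
        tr P (P ⊓ P.map (MulAut.conj x).toMonoidHom)
            (res (P.map (MulAut.conj x).toMonoidHom)
              (P ⊓ P.map (MulAut.conj x).toMonoidHom) (conj x P ζ)) = 0) := by
  intro ζ
  let M : CohomologyOperations k P A :=
    ⟨res, tr, conj, hfrob, htr_one, hconj_res, hconj_comp, hconj_central, htr_conjP⟩
  have hlhs := M.tr_res_conj_of_mul_eq inf_le_left inf_le_right hc ha
    (mul_mem hy (Subgroup.le_normalizer hb)) (by rw [hcx, mul_assoc]) ζ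
  rw [M.conjSelf_mul_of_mem hy hb, ← M.tr_res_conj_of_mem_normalizer hy] at hlhs
  refine ⟨hlhs, fun hx => ?_⟩
  rw [hlhs, (CharP.cast_eq_zero_iff k p _).mpr, zero_smul]
  exact hP.dvd_relIndex fun hPU => hx (Subgroup.mem_normalizer_of_le_map_conj
    ((Subgroup.le_of_le_map_conj_inv ha hPU).trans inf_le_right))

/-- Let `char k = p`, let `P ≤ G` be a finite `p`-group and let
`x, y, c, a, b ∈ G` with `c ∈ C_G(P ∩ ˣP)`, `a, b ∈ P`, `y ∈ N_G(P)` and `cx = ayb`.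
Then for every `ζ ∈ H*(P,k)`,
`tr^P_{P∩ˣP} res^{ˣP}_{P∩ˣP}(ˣζ) = |P : a⁻¹(P∩ˣP)a| · tr^P_{P∩ʸP} res^{ʸP}_{P∩ʸP}(ʸζ)`,
and in particular this class vanishes (in characteristic `p`) unless `x` normalizes `P`.
The cohomology rings `H*(Q,k)` are modelled abstractly as `k`-algebras `A Q` with
`k`-linear restriction, transfer and conjugation maps satisfying the standard (assumed
known) identities listed as hypotheses. -/
theorem stmt4 {k : Type*} [Field k] {p : ℕ} [Fact p.Prime] [CharP k p]
    {G : Type*} [Group G] [Finite G]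
    (P : Subgroup G) (hP : IsPGroup p P)
    (A : Subgroup G → Type*) [∀ Q, Ring (A Q)] [∀ Q, Algebra k (A Q)]
    (res : ∀ Q R : Subgroup G, A Q →ₗ[k] A R)
    (tr : ∀ Q R : Subgroup G, A R →ₗ[k] A Q)
    (conj : ∀ (g : G) (Q : Subgroup G), A Q →ₗ[k] A (Q.map (MulAut.conj g).toMonoidHom))
    -- standard identities for transfer, restriction and conjugation:
    (hfrob : ∀ (Q R : Subgroup G), R ≤ Q → ∀ (ζ : A Q) (τ : A R),
      tr Q R (res Q R ζ * τ) = ζ * tr Q R τ)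
    (htr_one : ∀ (Q R : Subgroup G), R ≤ Q →
      tr Q R 1 = (R.relIndex Q : k) • (1 : A Q))
    (hres_comp : ∀ (Q R S : Subgroup G), S ≤ R → R ≤ Q → ∀ ζ : A Q,
      res R S (res Q R ζ) = res Q S ζ)
    (hconj_res : ∀ (g : G) (Q R : Subgroup G), R ≤ Q → ∀ ζ : A Q,
      conj g R (res Q R ζ)
        = res (Q.map (MulAut.conj g).toMonoidHom) (R.map (MulAut.conj g).toMonoidHom)
            (conj g Q ζ))
    (hconj_comp : ∀ (g h : G) (Q : Subgroup G) (ζ : A Q),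
      conj g (Q.map (MulAut.conj h).toMonoidHom) (conj h Q ζ)
        = cast (congrArg A (map_conj_mul Q g h)) (conj (g * h) Q ζ))
    (hconj_central : ∀ (S : Subgroup G) (c : G),
      c ∈ Subgroup.centralizer (S : Set G) →
      ∀ (hmap : S.map (MulAut.conj c).toMonoidHom = S) (η : A S),
        conj c S η = cast (congrArg A hmap.symm) η)
    (htr_conjP : ∀ a : G, a ∈ P → ∀ (S : Subgroup G) (η : A S),
      tr P (S.map (MulAut.conj a).toMonoidHom) (conj a S η) = tr P S η)
    -- the situation of the statement:
    (x y c a b : G) (hy : y ∈ Subgroup.normalizer (P : Set G)) (ha : a ∈ P) (hb : b ∈ P)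
    (hc : c ∈ Subgroup.centralizer
      ((P ⊓ P.map (MulAut.conj x).toMonoidHom : Subgroup G) : Set G))
    (hcx : c * x = a * y * b) :
    ∀ ζ : A P,
      tr P (P ⊓ P.map (MulAut.conj x).toMonoidHom)
          (res (P.map (MulAut.conj x).toMonoidHom)
            (P ⊓ P.map (MulAut.conj x).toMonoidHom) (conj x P ζ))
        = (((P ⊓ P.map (MulAut.conj x).toMonoidHom).map
              (MulAut.conj a⁻¹).toMonoidHom).relIndex P : k) •
          tr P (P ⊓ P.map (MulAut.conj y).toMonoidHom)
            (res (P.map (MulAut.conj y).toMonoidHom)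
              (P ⊓ P.map (MulAut.conj y).toMonoidHom) (conj y P ζ)) ∧
      (x ∉ Subgroup.normalizer (P : Set G) →
        tr P (P ⊓ P.map (MulAut.conj x).toMonoidHom)
            (res (P.map (MulAut.conj x).toMonoidHom)
              (P ⊓ P.map (MulAut.conj x).toMonoidHom) (conj x P ζ)) = 0) :=
  stmt4_general P hP A res tr conj hfrob htr_one hconj_res hconj_comp hconj_central htr_conjP x y c
    a b hy ha hb hc hcx
end

section
/- Let k be a commutative ring and G a finite group. The k-linear map δ_G : C^n(G,k) → Hom_k((kG)^{⊗n}, kG) defined on the group-cohomology bar cochain complex by δ_G(f)(g₁ ⊗ … ⊗ g_n) = f(g₁,…,g_n)·g₁⋯g_n is a chain map: it commutes with the differentials of the group cohomology bar complex and of the Hochschild cochain complex of kG, and hence induces a graded k-algebra homomorphism δ_G : H*(G,k) → HH*(kG). -/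
noncomputable section

/-- Group-cohomology bar `n`-cochains of `G` with trivial coefficients `k`. -/
def GCochain (k G : Type*) (n : ℕ) : Type _ := (Fin n → G) → k

/-- Hochschild bar `n`-cochains of the group algebra `kG`:
`Hom_k((kG)^{⊗n}, kG)` identified with functions on `n`-tuples of group elements. -/
def HCochain (k G : Type*) [Semiring k] [Group G] (n : ℕ) : Type _ :=
  (Fin n → G) → MonoidAlgebra k G

/-- The `n`-tuple obtained from an `(n+1)`-tuple by multiplying the entries in
positions `i` and `i+1`. -/
def contractAt {G : Type*} [Group G] {n : ℕ} (t : Fin (n + 1) → G) (i : Fin n) :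
    Fin n → G := fun j =>
  if (j : ℕ) < (i : ℕ) then t j.castSucc
  else if j = i then t i.castSucc * t i.succ
  else t j.succ

/-- The bar differential of group cohomology with trivial coefficients. -/
def dGrp {k G : Type*} [CommRing k] [Group G] (n : ℕ) (f : GCochain k G n) :
    GCochain k G (n + 1) := fun t =>
  f (Fin.tail t)
    + (∑ i : Fin n, ((-1 : k) ^ ((i : ℕ) + 1)) * f (contractAt t i))
    + ((-1 : k) ^ (n + 1)) * f (Fin.init t)

/-- The Hochschild differential of `kG`, written on group elements. -/
def dHoch {k G : Type*} [CommRing k] [Group G] (n : ℕ) (f : HCochain k G n) :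
    HCochain k G (n + 1) := fun t =>
  MonoidAlgebra.single (t 0) (1 : k) * f (Fin.tail t)
    + (∑ i : Fin n, ((-1 : k) ^ ((i : ℕ) + 1)) • f (contractAt t i))
    + ((-1 : k) ^ (n + 1)) • (f (Fin.init t) * MonoidAlgebra.single (t (Fin.last n)) (1 : k))

/-- The diagonal induction `δ_G` on bar cochains:
`δ_G(f)(g₁ ⊗ … ⊗ g_n) = f(g₁,…,g_n)·g₁⋯g_n`. -/
def deltaG {k G : Type*} [CommRing k] [Group G] (n : ℕ) (f : GCochain k G n) :
    HCochain k G n := fun t => MonoidAlgebra.single ((List.ofFn t).prod) (f t)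

/-- Cup product of group cochains. -/
def cupG {k G : Type*} [CommRing k] [Group G] {m n : ℕ}
    (f : GCochain k G m) (f' : GCochain k G n) : GCochain k G (m + n) := fun t =>
  f (fun i => t (Fin.castAdd n i)) * f' (fun j => t (Fin.natAdd m j))

/-- Cup product of Hochschild cochains of `kG` (on group elements). -/
def cupH {k G : Type*} [CommRing k] [Group G] {m n : ℕ}
    (F : HCochain k G m) (F' : HCochain k G n) : HCochain k G (m + n) := fun t =>
  F (fun i => t (Fin.castAdd n i)) * F' (fun j => t (Fin.natAdd m j))

-- auxiliary lemmas

lemma prodOfFn_succ {G : Type*} [Monoid G] {n : ℕ} (t : Fin (n + 1) → G) :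
    (List.ofFn t).prod = t 0 * (List.ofFn (Fin.tail t)).prod := by
  rw [List.ofFn_succ, List.prod_cons]; rfl

lemma prodOfFn_init {G : Type*} [Monoid G] {n : ℕ} (t : Fin (n + 1) → G) :
    (List.ofFn t).prod = (List.ofFn (Fin.init t)).prod * t (Fin.last n) := by
  rw [List.ofFn_succ', List.prod_concat]; rfl

lemma tail_contract {G : Type*} [Group G] {n : ℕ} (t : Fin (n + 2) → G) (i : Fin n) :
    Fin.tail (contractAt t i.succ) = contractAt (Fin.tail t) i := by
  funext j
  simp only [Fin.tail, contractAt]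
  rcases lt_trichotomy (j : ℕ) (i : ℕ) with h | h | h
  · rw [if_pos (by simpa using h), if_pos h, Fin.succ_castSucc]
  · have hj : j = i := Fin.ext h
    subst hj
    rw [if_neg (by simp), if_pos rfl, if_neg (by simp), if_pos rfl, Fin.succ_castSucc]
  · have h1 : ¬ ((j.succ : ℕ) < (i.succ : ℕ)) := by simpa using not_lt.2 h.le
    rw [if_neg h1, if_neg (by simp [Fin.ext_iff]; omega), if_neg (by omega),
      if_neg (by simp [Fin.ext_iff]; omega)]

lemma prod_contract {G : Type*} [Group G] :
    ∀ (n : ℕ) (t : Fin (n + 1) → G) (i : Fin n),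
    (List.ofFn (contractAt t i)).prod = (List.ofFn t).prod := by
  intro n
  induction n with
  | zero => exact fun t i => i.elim0
  | succ n ih =>
    intro t i
    refine Fin.cases ?_ ?_ i
    · have h0 : contractAt t 0 0 = t 0 * t 1 := by
        simp [contractAt]
      have ht : Fin.tail (contractAt t 0) = Fin.tail (Fin.tail t) := by
        funext j
        simp only [Fin.tail, contractAt]
        rw [if_neg (by simp), if_neg (by simp [Fin.ext_iff])]
      rw [prodOfFn_succ (contractAt t 0), h0, ht, prodOfFn_succ t,
        prodOfFn_succ (Fin.tail t), ← mul_assoc]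
      rfl
    · intro j
      rw [prodOfFn_succ (contractAt t j.succ), tail_contract, ih, prodOfFn_succ t]
      congr 1


/-- The diagonal map `δ_G(f)(g₁⊗…⊗g_n) = f(g₁,…,g_n)g₁⋯g_n` is a
`k`-linear chain map from the group cohomology bar cochain complex to the Hochschild
cochain complex of `kG` and is compatible with cup products; hence it induces a graded
`k`-algebra homomorphism `δ_G : H*(G,k) → HH*(kG)`. -/
theorem stmt8 {k G : Type*} [CommRing k] [Group G] [Finite G] :
    (∀ (n : ℕ) (f : GCochain k G n), dHoch n (deltaG n f) = deltaG (n + 1) (dGrp n f)) ∧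
    (∀ (n : ℕ) (f f' : GCochain k G n) (c : k),
      deltaG n (fun t => c * f t + f' t)
        = fun t => c • deltaG n f t + deltaG n f' t) ∧
    (∀ (m n : ℕ) (f : GCochain k G m) (f' : GCochain k G n),
      deltaG (m + n) (cupG f f') = cupH (deltaG m f) (deltaG n f')) := by
  refine ⟨?_, ?_, ?_⟩
  · intro n f
    funext t
    simp only [dHoch, deltaG, dGrp]
    have hs : ∀ i : Fin n,
        ((-1 : k) ^ ((i : ℕ) + 1)) • (MonoidAlgebra.single
            (List.ofFn (contractAt t i)).prod (f (contractAt t i)) : MonoidAlgebra k G)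
          = MonoidAlgebra.single (List.ofFn t).prod
            (((-1 : k) ^ ((i : ℕ) + 1)) * f (contractAt t i)) := fun i => by
      rw [MonoidAlgebra.smul_single', prod_contract]
    have hsum : MonoidAlgebra.single (R := k) (M := G) (List.ofFn t).prod
          (∑ i : Fin n, ((-1 : k) ^ ((i : ℕ) + 1)) * f (contractAt t i))
        = ∑ i : Fin n, MonoidAlgebra.single (List.ofFn t).prod
            (((-1 : k) ^ ((i : ℕ) + 1)) * f (contractAt t i)) :=
      map_sum (MonoidAlgebra.singleAddHom (R := k) (List.ofFn t).prod) _ _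
    rw [MonoidAlgebra.single_mul_single, MonoidAlgebra.single_mul_single, one_mul, mul_one,
      MonoidAlgebra.smul_single', ← prodOfFn_succ, ← prodOfFn_init,
      MonoidAlgebra.single_add, MonoidAlgebra.single_add, hsum]
    simp only [hs]
  · intro n f f' c
    funext t
    simp only [deltaG, MonoidAlgebra.smul_single', MonoidAlgebra.single_add]
  · intro m n f f'
    funext t
    simp only [deltaG, cupG, cupH, MonoidAlgebra.single_mul_single, List.ofFn_add,
      List.prod_append]
    rfl

end
end

section
/- Let k be a commutative ring, G a finite group, and K, H ≤ G. Then the Mackey decomposition holds for Hochschild-cohomology restriction and transfer: r^G_K ∘ t^G_H = Σ_{g ∈ [K\G/H]} t^K_{K ∩ gHg⁻¹} ∘ r^{gHg⁻¹}_{K ∩ gHg⁻¹} ∘ c_{g,H}, as graded k-linear maps HH*(kH) → HH*(kK), where the sum runs over representatives of the (K,H)-double cosets in G. -/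
/-! Every map in the formula is the transfer `t_{k[S]}` of a permutation bimodule `k[S]`.
By the composition rule the left side is the transfer of `kG` viewed as a `(kK,kH)`-bimodule,
and the summand for `g` is the transfer of `kK ⊗_{k[K ∩ ᵍH]} k[gH] ≅ k[KgH]`; the
multiplication map is injective on the balanced product because `s₁ u₁ = s₂ u₂` forces
`s₁⁻¹ s₂ = u₁ u₂⁻¹ ∈ K ∩ ᵍH`. The double cosets `KgH`, `g ∈ R`, partition `G`, so
additivity of the transfer finishes the proof. -/

open Pointwise

namespace MackeyDecomposition

variable {G : Type*} [Group G]

def IsBiStable (K L : Subgroup G) (S : Set G) : Prop :=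
  (∀ x ∈ K, ∀ s ∈ S, x * s ∈ S) ∧ ∀ s ∈ S, ∀ l ∈ L, s * l ∈ S

/-- Multiplication `S ×_M S' → S * S'` is injective; this is what makes
`k[S] ⊗_{kM} k[S'] ≅ k[S * S']`. -/
def BalancedMulInjective (M : Subgroup G) (S S' : Set G) : Prop :=
  ∀ s₁ ∈ S, ∀ s₂ ∈ S, ∀ u₁ ∈ S', ∀ u₂ ∈ S',
    s₁ * u₁ = s₂ * u₂ → ∃ m ∈ M, s₂ = s₁ * m ∧ u₂ = m⁻¹ * u₁

lemma mem_map_conj_iff {H : Subgroup G} {g x : G} :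
    x ∈ H.map (MulAut.conj g).toMonoidHom ↔ g⁻¹ * x * g ∈ H := by
  constructor
  · rintro ⟨h, hh, rfl⟩
    simpa [mul_assoc] using hh
  · exact fun hx => ⟨g⁻¹ * x * g, hx, by simp [mul_assoc]⟩

lemma IsBiStable.mono {K K' L L' : Subgroup G} {S : Set G} (hS : IsBiStable K L S)
    (hK : K' ≤ K) (hL : L' ≤ L) : IsBiStable K' L' S :=
  ⟨fun x hx => hS.1 x (hK hx), fun s hs l hl => hS.2 s hs l (hL hl)⟩

lemma isBiStable_univ (K L : Subgroup G) : IsBiStable K L Set.univ :=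
  ⟨fun _ _ _ _ => trivial, fun _ _ _ _ => trivial⟩

lemma isBiStable_coe (A : Subgroup G) : IsBiStable A A A :=
  ⟨fun _ hx _ hs => mul_mem hx hs, fun _ hs _ hl => mul_mem hs hl⟩

lemma isBiStable_smul (H : Subgroup G) (g : G) :
    IsBiStable (H.map (MulAut.conj g).toMonoidHom) H (g • (H : Set G)) := by
  refine ⟨?_, ?_⟩
  · rintro x hx _ ⟨h, hh, rfl⟩
    exact ⟨g⁻¹ * x * g * h, mul_mem (mem_map_conj_iff.mp hx) hh, by simp [mul_assoc]⟩
  · rintro _ ⟨h, hh, rfl⟩ l hl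
    exact ⟨h * l, mul_mem hh hl, by simp [mul_assoc]⟩

lemma coe_mul_eq_of_forall_mul_mem {A : Subgroup G} {S : Set G}
    (hS : ∀ x ∈ A, ∀ s ∈ S, x * s ∈ S) : (A : Set G) * S = S := by
  refine subset_antisymm ?_ fun s hs => ⟨1, one_mem A, s, hs, one_mul s⟩
  rintro _ ⟨x, hx, s, hs, rfl⟩
  exact hS x hx s hs

lemma balancedMulInjective_of_inv_mul_mem {M : Subgroup G} {S : Set G} (S' : Set G)
    (hS : ∀ s₁ ∈ S, ∀ s₂ ∈ S, s₁⁻¹ * s₂ ∈ M) : BalancedMulInjective M S S' := by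
  intro s₁ hs₁ s₂ hs₂ u₁ _ u₂ _ h
  refine ⟨s₁⁻¹ * s₂, hS s₁ hs₁ s₂ hs₂, (mul_inv_cancel_left s₁ s₂).symm, ?_⟩
  rw [mul_inv_rev, inv_inv, mul_assoc, h, inv_mul_cancel_left]

/-- Mackey's formula at the level of bisets: `k[K] ⊗_{k[K ∩ ᵍH]} k[gH] ≅ k[KgH]`. -/
lemma balancedMulInjective_inf_map_conj (K H : Subgroup G) (g : G) :
    BalancedMulInjective (K ⊓ H.map (MulAut.conj g).toMonoidHom) K (g • (H : Set G)) := by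
  rintro s₁ hs₁ s₂ hs₂ _ ⟨h₁, hh₁, rfl⟩ _ ⟨h₂, hh₂, rfl⟩ h
  simp only [smul_eq_mul] at h ⊢
  have hs₂' : s₂ = s₁ * (g * h₁) * (g * h₂)⁻¹ := eq_mul_inv_of_mul_eq h.symm
  refine ⟨s₁⁻¹ * s₂, ⟨K.mul_mem (K.inv_mem hs₁) hs₂, mem_map_conj_iff.mpr ?_⟩,
    (mul_inv_cancel_left s₁ s₂).symm, ?_⟩
  · rw [hs₂']
    simpa [mul_assoc] using H.mul_mem hh₁ (H.inv_mem hh₂)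
  · rw [mul_inv_rev, inv_inv, mul_assoc, h, inv_mul_cancel_left]

lemma mem_mul_smul_iff {K H : Subgroup G} {g q : G} :
    q ∈ (K : Set G) * g • (H : Set G) ↔ ∃ x ∈ K, ∃ h ∈ H, q = x * g * h := by
  simp only [Set.mem_mul, Set.mem_smul_set, smul_eq_mul, SetLike.mem_coe]
  constructor
  · rintro ⟨x, hx, _, ⟨h, hh, rfl⟩, rfl⟩
    exact ⟨x, hx, h, hh, by rw [mul_assoc]⟩
  · rintro ⟨x, hx, h, hh, rfl⟩
    exact ⟨x, hx, _, ⟨h, hh, rfl⟩, by rw [mul_assoc]⟩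

lemma iUnion_mul_smul_eq_univ {K H : Subgroup G} {R : Finset G}
    (hR : ∀ q : G, ∃! r, r ∈ R ∧ ∃ x ∈ K, ∃ h ∈ H, q = x * r * h) :
    ⋃ r ∈ R, (K : Set G) * r • (H : Set G) = Set.univ := by
  refine Set.eq_univ_of_forall fun q => ?_
  obtain ⟨r, ⟨hr, hq⟩, -⟩ := hR q
  exact Set.mem_biUnion hr (mem_mul_smul_iff.mpr hq)

lemma pairwiseDisjoint_mul_smul {K H : Subgroup G} {R : Finset G}
    (hR : ∀ q : G, ∃! r, r ∈ R ∧ ∃ x ∈ K, ∃ h ∈ H, q = x * r * h) :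
    (R : Set G).PairwiseDisjoint fun r => (K : Set G) * r • (H : Set G) := by
  intro i hi j hj hij
  refine Set.disjoint_left.mpr fun q hqi hqj => hij ?_
  obtain ⟨r, -, hunique⟩ := hR q
  exact (hunique i ⟨hi, mem_mul_smul_iff.mp hqi⟩).trans
    (hunique j ⟨hj, mem_mul_smul_iff.mp hqj⟩).symm

end MackeyDecomposition

open MackeyDecomposition in
theorem stmt12_general {k : Type*} [CommRing k] {G : Type*} [Group G]
    (HH : Subgroup G → Type*) [∀ Q, AddCommGroup (HH Q)] [∀ Q, Module k (HH Q)]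
    (t : ∀ (K H : Subgroup G), Set G → (HH H →ₗ[k] HH K))
    (hcomp : ∀ (K M L : Subgroup G) (S S' : Set G),
      (∀ x ∈ K, ∀ s ∈ S, x * s ∈ S) → (∀ s ∈ S, ∀ m ∈ M, s * m ∈ S) →
      (∀ m ∈ M, ∀ s ∈ S', m * s ∈ S') → (∀ s ∈ S', ∀ l ∈ L, s * l ∈ S') →
      (∀ s₁ ∈ S, ∀ s₂ ∈ S, ∀ u₁ ∈ S', ∀ u₂ ∈ S',
        s₁ * u₁ = s₂ * u₂ → ∃ m ∈ M, s₂ = s₁ * m ∧ u₂ = m⁻¹ * u₁) →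
      (t K M S) ∘ₗ (t M L S') = t K L (S * S'))
    (hadd : ∀ (K H : Subgroup G) (I : Finset G) (F : G → Set G),
      (∀ i ∈ I, ∀ j ∈ I, i ≠ j → Disjoint (F i) (F j)) →
      t K H (⋃ i ∈ I, F i) = ∑ i ∈ I, t K H (F i))
    (K H : Subgroup G) (R : Finset G)
    (hR : ∀ q : G, ∃! r, r ∈ R ∧ ∃ x ∈ K, ∃ h ∈ H, q = x * r * h) :
    (t K ⊤ Set.univ) ∘ₗ (t ⊤ H Set.univ)
      = ∑ g ∈ R,
          (t K (K ⊓ H.map (MulAut.conj g).toMonoidHom) (K : Set G)) ∘ₗ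
          (t (K ⊓ H.map (MulAut.conj g).toMonoidHom) (H.map (MulAut.conj g).toMonoidHom)
              ((H.map (MulAut.conj g).toMonoidHom : Subgroup G) : Set G)) ∘ₗ
          (t (H.map (MulAut.conj g).toMonoidHom) H ((g * ·) '' (H : Set G))) := by
  have comp {K M L : Subgroup G} {S S' : Set G} (hS : IsBiStable K M S)
      (hS' : IsBiStable M L S') (hinj : BalancedMulInjective M S S') :
      t K M S ∘ₗ t M L S' = t K L (S * S') :=
    hcomp K M L S S' hS.1 hS.2 hS'.1 hS'.2 hinj
  have restrict_comp_transfer : t K ⊤ Set.univ ∘ₗ t ⊤ H Set.univ = t K H Set.univ := by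
    rw [comp (isBiStable_univ _ _) (isBiStable_univ _ _)
      (balancedMulInjective_of_inv_mul_mem _ fun _ _ _ _ => Subgroup.mem_top _),
      Set.univ_mul_univ]
  have summand (g : G) : let gH := H.map (MulAut.conj g).toMonoidHom
      t K (K ⊓ gH) K ∘ₗ t (K ⊓ gH) gH gH ∘ₗ t gH H (g • (H : Set G))
        = t K H ((K : Set G) * g • (H : Set G)) := by
    intro gH
    have hgH := isBiStable_smul H g
    rw [comp ((isBiStable_coe gH).mono inf_le_right le_rfl) hgH
        (balancedMulInjective_of_inv_mul_mem _ fun _ h₁ _ h₂ => gH.mul_mem (gH.inv_mem h₁) h₂),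
      coe_mul_eq_of_forall_mul_mem hgH.1,
      comp ((isBiStable_coe K).mono le_rfl inf_le_left) (hgH.mono inf_le_right le_rfl)
        (balancedMulInjective_inf_map_conj K H g)]
  rw [restrict_comp_transfer, ← iUnion_mul_smul_eq_univ hR,
    hadd K H R _ fun i hi j hj => pairwiseDisjoint_mul_smul hR hi hj]
  -- `(g * ·) '' ↑H` and `g • ↑H` agree definitionally
  exact Finset.sum_congr rfl fun g _ => (summand g).symm

/-- Mackey decomposition for restriction and transfer in Hochschild
cohomology of group algebras:
`r^G_K ∘ t^G_H = Σ_{g ∈ [K\G/H]} t^K_{K∩ᵍH} ∘ r^{ᵍH}_{K∩ᵍH} ∘ c_{g,H}`.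
Hochschild cohomologies are modelled abstractly; `t K H S` is Linckelmann's transfer
map `HH*(kH) → HH*(kK)` associated to the permutation `(kK,kH)`-bimodule `k[S]` for a
`(K,H)`-stable subset `S ⊆ G`.  Thus `r^G_K = t K ⊤ Set.univ`, `t^G_H = t ⊤ H Set.univ`,
`c_{g,H} = t (ᵍH) H (g•H)`, `r^{ᵍH}_{K∩ᵍH} = t (K⊓ᵍH) (ᵍH) ↑(ᵍH)` and
`t^K_{K∩ᵍH} = t K (K⊓ᵍH) ↑K`.  The hypotheses are the composition rule
`t_M ∘ t_N = t_{M⊗N}` (under the freeness condition making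
`k[S] ⊗_{kM} k[S'] ≅ k[S·S']`) and additivity of `t` in disjoint unions of bisets,
corresponding to `kG ≅ ⊕_{g∈[K\G/H]} kK ⊗_{k[K∩ᵍH]} k[gH] ≅ ⊕ k[KgH]`. -/
theorem stmt12 {k : Type*} [CommRing k] {G : Type*} [Group G] [Finite G]
    (HH : Subgroup G → Type*) [∀ Q, AddCommGroup (HH Q)] [∀ Q, Module k (HH Q)]
    (t : ∀ (K H : Subgroup G), Set G → (HH H →ₗ[k] HH K))
    (hcomp : ∀ (K M L : Subgroup G) (S S' : Set G),
      (∀ x ∈ K, ∀ s ∈ S, x * s ∈ S) → (∀ s ∈ S, ∀ m ∈ M, s * m ∈ S) →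
      (∀ m ∈ M, ∀ s ∈ S', m * s ∈ S') → (∀ s ∈ S', ∀ l ∈ L, s * l ∈ S') →
      (∀ s₁ ∈ S, ∀ s₂ ∈ S, ∀ u₁ ∈ S', ∀ u₂ ∈ S',
        s₁ * u₁ = s₂ * u₂ → ∃ m ∈ M, s₂ = s₁ * m ∧ u₂ = m⁻¹ * u₁) →
      (t K M S) ∘ₗ (t M L S') = t K L (S * S'))
    (hadd : ∀ (K H : Subgroup G) (I : Finset G) (F : G → Set G),
      (∀ i ∈ I, ∀ j ∈ I, i ≠ j → Disjoint (F i) (F j)) →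
      t K H (⋃ i ∈ I, F i) = ∑ i ∈ I, t K H (F i))
    (K H : Subgroup G) (R : Finset G)
    (hR : ∀ q : G, ∃! r, r ∈ R ∧ ∃ x ∈ K, ∃ h ∈ H, q = x * r * h) :
    (t K ⊤ Set.univ) ∘ₗ (t ⊤ H Set.univ)
      = ∑ g ∈ R,
          (t K (K ⊓ H.map (MulAut.conj g).toMonoidHom) (K : Set G)) ∘ₗ
          (t (K ⊓ H.map (MulAut.conj g).toMonoidHom) (H.map (MulAut.conj g).toMonoidHom)
              ((H.map (MulAut.conj g).toMonoidHom : Subgroup G) : Set G)) ∘ₗ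
          (t (H.map (MulAut.conj g).toMonoidHom) H ((g * ·) '' (H : Set G))) :=
  stmt12_general HH t hcomp hadd K H R hR
end

section
/- Let k be a field of characteristic p, P a finite p-group, G a finite group containing P. Suppose Y ⊆ G is a finite subset containing a set of representatives of N/PC for subgroups PC ≤ N ≤ G with N normalizing P, and suppose that for each x ∈ Y the map t_x(ζ) = tr^P_{P∩xPx⁻¹} res^{xPx⁻¹}_{P∩xPx⁻¹}(ˣζ) equals t_y(ζ) for some y ∈ N whenever x ∈ N, and equals 0 whenever x ∉ N. Then the image of t_Y = Σ_{x∈Y} t_x is contained in tr^N_{PC}(H*(P,k)) ⊆ H*(P,k)^{N/PC} — the subspace of N/PC-invariant classes. -/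
/-!
Only the summands with `x ∈ N` survive in `t_Y`, and there `t_x` is conjugation by `x`, so
`t_Y ζ = Σ_{x ∈ Y ∩ N} ˣζ` is the relative trace `tr^N_{PC} ζ` computed with the coset
representatives `Y ∩ N`. Left multiplication by `n ∈ N` carries one set of representatives of
`N/PC` to another, and since `PC` acts trivially the relative trace does not depend on the
choice of representatives; hence it is `N`-invariant.
-/

namespace Subgroup

variable {G : Type*} [Group G] {N H : Subgroup G}

def IsLeftCosetReps (N H : Subgroup G) (S : Finset G) : Prop :=
  (S : Set G) ⊆ N ∧ ∀ n ∈ N, ∃! x, x ∈ S ∧ x⁻¹ * n ∈ H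

namespace IsLeftCosetReps

variable {S T : Finset G}

noncomputable def rep (hS : IsLeftCosetReps N H S) (n : G) (hn : n ∈ N) : G :=
  (hS.2 n hn).exists.choose

variable (hS : IsLeftCosetReps N H S) (hT : IsLeftCosetReps N H T)
include hS

lemma rep_mem {n : G} (hn : n ∈ N) : hS.rep n hn ∈ S :=
  (hS.2 n hn).exists.choose_spec.1

lemma rep_mem_subgroup {n : G} (hn : n ∈ N) : hS.rep n hn ∈ N :=
  hS.1 (hS.rep_mem hn)

lemma inv_rep_mul_mem {n : G} (hn : n ∈ N) : (hS.rep n hn)⁻¹ * n ∈ H :=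
  (hS.2 n hn).exists.choose_spec.2

lemma eq_rep {n x : G} (hn : n ∈ N) (hx : x ∈ S) (hxn : x⁻¹ * n ∈ H) : x = hS.rep n hn :=
  (hS.2 n hn).unique ⟨hx, hxn⟩ ⟨hS.rep_mem hn, hS.inv_rep_mul_mem hn⟩

include hT in
lemma rep_rep {x : G} (hx : x ∈ S) :
    hS.rep (hT.rep x (hS.1 hx)) (hT.rep_mem_subgroup _) = x := by
  refine (hS.eq_rep _ hx ?_).symm
  simpa using inv_mem (hT.inv_rep_mul_mem (hS.1 hx))

include hT in
lemma sum_eq {M : Type*} [AddCommMonoid M] {f : G → M}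
    (hf : ∀ x ∈ N, ∀ h ∈ H, f (x * h) = f x) : ∑ x ∈ S, f x = ∑ x ∈ T, f x := by
  refine Finset.sum_bij' (fun x hx => hT.rep x (hS.1 hx)) (fun y hy => hS.rep y (hT.1 hy))
    (fun x _ => hT.rep_mem _) (fun y _ => hS.rep_mem _) (fun x hx => hS.rep_rep hT hx)
    (fun y hy => hT.rep_rep hS hy) fun x hx => ?_
  have hrep := hT.inv_rep_mul_mem (hS.1 hx)
  calc f x = f (hT.rep x (hS.1 hx) * ((hT.rep x (hS.1 hx))⁻¹ * x)) := by
        rw [mul_inv_cancel_left]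
    _ = f (hT.rep x (hS.1 hx)) := hf _ (hT.rep_mem_subgroup _) _ hrep

lemma map_mulLeft {n : G} (hn : n ∈ N) :
    IsLeftCosetReps N H (S.map (mulLeftEmbedding n)) := by
  refine ⟨?_, fun m hm => ?_⟩
  · intro _ hy
    obtain ⟨x, hx, rfl⟩ := Finset.mem_map.1 hy
    exact mul_mem hn (hS.1 hx)
  · have hm' : n⁻¹ * m ∈ N := mul_mem (inv_mem hn) hm
    refine ⟨n * hS.rep _ hm', ⟨Finset.mem_map_of_mem _ (hS.rep_mem hm'), ?_⟩, ?_⟩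
    · simpa [mul_assoc] using hS.inv_rep_mul_mem hm'
    · rintro _ ⟨hy, hyH⟩
      obtain ⟨y, hyS, rfl⟩ := Finset.mem_map.1 hy
      rw [hS.eq_rep hm' hyS (by simpa [mul_assoc] using hyH), mulLeftEmbedding_apply]

lemma apply_sum_eq_sum {k A : Type*} [Semiring k] [AddCommMonoid A] [Module k A]
    {ρ : G → A →ₗ[k] A} (hHN : H ≤ N) (hρ_mul : ∀ m ∈ N, ∀ n ∈ N, ρ (m * n) = (ρ m).comp (ρ n))
    (hρ_H : ∀ h ∈ H, ρ h = LinearMap.id) {n : G} (hn : n ∈ N) (ζ : A) :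
    ρ n (∑ x ∈ S, ρ x ζ) = ∑ x ∈ S, ρ x ζ := by
  have hf : ∀ x ∈ N, ∀ h ∈ H, ρ (x * h) ζ = ρ x ζ := fun x hx h hh => by
    rw [hρ_mul x hx h (hHN hh), hρ_H h hh, LinearMap.comp_id]
  calc ρ n (∑ x ∈ S, ρ x ζ) = ∑ x ∈ S, ρ (n * x) ζ := by
        rw [map_sum]
        refine Finset.sum_congr rfl fun x hx => ?_
        rw [hρ_mul n hn x (hS.1 hx), LinearMap.comp_apply]
    _ = ∑ x ∈ S.map (mulLeftEmbedding n), ρ x ζ := by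
        rw [Finset.sum_map]
        rfl
    _ = ∑ x ∈ S, ρ x ζ := (hS.map_mulLeft hn).sum_eq hS hf

end IsLeftCosetReps

end Subgroup

/-- Let `P` be a finite `p`-subgroup of `G`, `PC ≤ N ≤ N_G(P)`, and let
`ρ` be the conjugation action of `N` on `H*(P,k)` (trivial on `PC`).  Suppose the finite
set `Y ⊆ G` contains a set of representatives of `N/PC` (indeed `Y ∩ N` is such a set),
that `t_x = t_y = ρ y` for some `y ∈ N` whenever `x ∈ Y ∩ N` (for `y ∈ N`, `t_y` is
conjugation by `y`), and that `t_x = 0` whenever `x ∈ Y \ N`.  Then the image of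
`t_Y = Σ_{x∈Y} t_x` is contained in `tr^N_{PC}(H*(P,k)) ⊆ H*(P,k)^{N/PC}`: every value
of `t_Y` is a relative trace `Σ_{x ∈ Y∩N} ρ x η` and is invariant under `N`. -/
theorem stmt14 {k : Type*} [Field k] {p : ℕ} [Fact p.Prime] [CharP k p]
    {G : Type*} [Group G] [Finite G]
    (P N PC : Subgroup G) (hP : IsPGroup p P)
    (hPCN : PC ≤ N) (hN : N ≤ Subgroup.normalizer (P : Set G))
    [DecidablePred fun g : G => g ∈ N]
    (A : Type*) [AddCommGroup A] [Module k A]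
    (ρ : G → A →ₗ[k] A)
    (hρ_mul : ∀ m ∈ N, ∀ n ∈ N, ρ (m * n) = (ρ m).comp (ρ n))
    (hρ_pc : ∀ c ∈ PC, ρ c = LinearMap.id)
    (t : G → A →ₗ[k] A)
    (Y : Finset G)
    (hYreps : ∀ n ∈ N, ∃! x, x ∈ Y ∧ x ∈ N ∧ x⁻¹ * n ∈ PC)
    (ht_in : ∀ x ∈ Y, x ∈ N → ∃ y ∈ N, t x = ρ y)
    (ht_conj : ∀ y ∈ N, t y = ρ y)
    (ht_out : ∀ x ∈ Y, x ∉ N → t x = 0) :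
    (∀ ζ : A, ∃ η : A,
      ∑ x ∈ Y, t x ζ = ∑ x ∈ Y.filter (fun g => g ∈ N), ρ x η) ∧
    (∀ ζ : A, ∀ n ∈ N, ρ n (∑ x ∈ Y, t x ζ) = ∑ x ∈ Y, t x ζ) := by
  have hreps : Subgroup.IsLeftCosetReps N PC (Y.filter fun g => g ∈ N) :=
    ⟨fun x hx => (Finset.mem_filter.1 hx).2, by simpa only [Finset.mem_filter, and_assoc]⟩
  have hsum : ∀ ζ, ∑ x ∈ Y, t x ζ = ∑ x ∈ Y.filter (fun g => g ∈ N), ρ x ζ := fun ζ => by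
    have hvanish : ∀ x ∈ Y, t x ζ ≠ 0 → x ∈ N := fun x hx hne =>
      by_contra fun hxN => hne (by rw [ht_out x hx hxN, LinearMap.zero_apply])
    rw [← Finset.sum_filter_of_ne hvanish]
    exact Finset.sum_congr rfl fun x hx => by rw [ht_conj x (Finset.mem_filter.1 hx).2]
  refine ⟨fun ζ => ⟨ζ, hsum ζ⟩, fun ζ n hn => ?_⟩
  rw [hsum]
  exact hreps.apply_sum_eq_sum hPCN hρ_mul hρ_pc hn ζ
end
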